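/- arXiv:1811.05837 — 2 statements merged into one kernel-verified Lean document; each statement's English description precedes it below -/
import Mathlib

section
/- Let (B_n)_{n∈ℕ} be a sequence of m×m real-matrix-valued functions on ℝ, each a stationary covariance matrix function on ℝ, and suppose Σ_{n=0}^∞ B_n(0)·P_n(1) converges entrywise. Then for all x₁, x₂ ∈ S^d and t₁, t₂ ∈ ℝ, the series K((x₁,t₁),(x₂,t₂)) = Σ_{n=0}^∞ B_n(t₁−t₂)·P_n(⟨x₁,x₂⟩) converges entrywise absolutely, and K is a covariance matrix kernel on S^d × ℝ: K((x₁,t₁),(x₂,t₂))ᵀ = K((x₂,t₂),(x₁,t₁)) and Σ_{i=1}^k Σ_{j=1}^k aᵢᵀ·K((xᵢ,tᵢ),(xⱼ,tⱼ))·aⱼ ≥ 0 for every k ∈ ℕ, all (xᵢ,tᵢ) ∈ S^d × ℝ and all aᵢ ∈ ℝ^m. -/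
open MeasureTheory ProbabilityTheory Filter
open scoped RealInnerProductSpace ENNReal NNReal BigOperators

noncomputable section

/-- The Jacobi polynomial `P_n^{(a,b)}(x)`. -/
def jacobiP (a b : ℝ) (n : ℕ) (x : ℝ) : ℝ :=
  Real.Gamma (a + n + 1) / (n.factorial * Real.Gamma (a + b + n + 1)) *
    ∑ k ∈ Finset.range (n + 1),
      (n.choose k : ℝ) * (Real.Gamma (a + b + n + k + 1) / Real.Gamma (a + k + 1)) *
        ((x - 1) / 2) ^ k

/-- Euclidean space `ℝ^{d+1}`. -/
abbrev EucSp (d : ℕ) := EuclideanSpace ℝ (Fin (d + 1))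

/-- The unit sphere `S^d ⊂ ℝ^{d+1}`. -/
abbrev Sph (d : ℕ) := Metric.sphere (0 : EucSp d) 1

/-- The rotation-invariant surface measure on `S^d`
(the `d`-dimensional Hausdorff measure). -/
def sphMeasure (d : ℕ) : Measure (Sph d) := μH[d]

/-- The geodesic distance on the sphere. -/
def sphDist (d : ℕ) (x y : Sph d) : ℝ :=
  Real.arccos ⟪(x : EucSp d), (y : EucSp d)⟫

/-- The normalizing constant `a_n`. -/
def aCoef (a b : ℝ) (n : ℕ) : ℝ :=
  Real.sqrt (Real.Gamma (b + 1) * (2 * n + a + b + 1) * Real.Gamma (n + a + b + 1) /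
    (Real.Gamma (a + b + 2) * Real.Gamma (n + b + 1)))

/-- Convergence of the series `Σ_{n=0}^∞ f n` to the limit `L`. -/
def SeriesConv (f : ℕ → ℝ) (L : ℝ) : Prop :=
  Filter.Tendsto (fun N => ∑ n ∈ Finset.range N, f n) Filter.atTop (nhds L)

/-- The covariance matrix `Cov(X,Y) = E[(X−E X)(Y−E Y)ᵀ]` of two square-integrable
random vectors. -/
def covM {Ω : Type*} [MeasureSpace Ω] {m : ℕ}
    (X Y : Ω → EuclideanSpace ℝ (Fin m)) : Matrix (Fin m) (Fin m) ℝ :=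
  Matrix.of fun i j => ∫ ω, (X ω i - ∫ ω', X ω' i) * (Y ω j - ∫ ω', Y ω' j)

/-- A stationary covariance matrix function on the temporal domain `T`. -/
def StationaryCov {T : Type*} [Neg T] [Sub T] {m : ℕ}
    (B : T → Matrix (Fin m) (Fin m) ℝ) : Prop :=
  (∀ t, B (-t) = (B t).transpose) ∧
  ∀ (k : ℕ) (t : Fin k → T) (a : Fin k → Fin m → ℝ),
    0 ≤ ∑ i, ∑ j, dotProduct (a i) ((B (t i - t j)).mulVec (a j))


/-!
Each summand `(x, s), (y, t) ↦ B_n(s - t) P_n(⟨x, y⟩)` is a positive semidefinite kernel, and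
positive semidefiniteness passes to entrywise limits. For a single summand this is a Schur
product argument in which `P_n(⟨x, y⟩)` is an explicit Gram matrix. With `N = d + 1` and
`A = (N - 3) / 2`, the Jacobi polynomial `P_n^{(A,A)}` is a positive multiple of
`G_n(s) = ∑ₖ μₖ s^(n-2k)`, because both satisfy the Jacobi differential equation, whose
polynomial solutions are fixed by their coefficient of degree `n`. On polynomials in `N`
variables the Fischer inner product `⟨p, q⟩ = ∑ₐ a! pₐ qₐ` makes multiplication by `uᵢ` adjoint
to `∂ᵢ`; hence `|u|²` is adjoint to the Laplacian and `⟨x, u⟩` to the derivative along `x`. So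
the harmonic polynomial `hₓ = ∑ₖ μₖ |u|^(2k) ⟨x, u⟩^(n-2k)` satisfies
`⟨hₓ, h_y⟩ = n! G_n(⟨x, y⟩)` when `|x| = |y| = 1`.

Absolute convergence comes from `2 × 2` minors: `|B_n(t)ᵢⱼ| ≤ (B_n(0)ᵢᵢ + B_n(0)ⱼⱼ) / 2` and
`|P_n(⟨x, y⟩)| ≤ P_n(1)`.
-/

open Finset

open scoped Matrix

/-- The coefficients of `G_n`, normalised by `μ₀ = 1`; the recursion is the one forced by the
Jacobi differential equation (equivalently, by harmonicity of `hₓ`). -/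
def gegenbauerCoeff (n : ℕ) (A : ℝ) : ℕ → ℝ
  | 0 => 1
  | k + 1 => -(((n : ℝ) - 2 * k) * (n - 2 * k - 1) / (2 * (k + 1) * (2 * n - 2 * k + 2 * A - 1)))
      * gegenbauerCoeff n A k

theorem gegenbauerCoeff_succ_mul {n k : ℕ} {A : ℝ} (hA : -1 ≤ A) (hk : 2 * k + 2 ≤ n) :
    2 * ((k : ℝ) + 1) * (2 * n - 2 * k + 2 * A - 1) * gegenbauerCoeff n A (k + 1)
      = -(((n : ℝ) - 2 * k) * (n - 2 * k - 1) * gegenbauerCoeff n A k) := by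
  have hkn : (2 * k + 2 : ℝ) ≤ n := mod_cast hk
  have hD : 2 * ((k : ℝ) + 1) * (2 * n - 2 * k + 2 * A - 1) ≠ 0 :=
    mul_ne_zero (by positivity) (by linarith)
  rw [gegenbauerCoeff, neg_mul, mul_neg, ← mul_assoc, mul_div_cancel₀ _ hD]

def gegenbauerPoly (n : ℕ) (A : ℝ) : Polynomial ℝ :=
  ∑ k ∈ range (n / 2 + 1), Polynomial.C (gegenbauerCoeff n A k) * Polynomial.X ^ (n - 2 * k)

namespace Polynomial

def jacobiOp (n : ℕ) (A : ℝ) : ℝ[X] →ₗ[ℝ] ℝ[X] where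
  toFun p := (1 - X ^ 2) * derivative (derivative p) - C (2 * A + 2) * X * derivative p
    + C ((n : ℝ) * (n + 2 * A + 1)) * p
  map_add' p q := by simp only [map_add]; ring
  map_smul' c p := by simp only [smul_eq_C_mul, derivative_C_mul, RingHom.id_apply]; ring

theorem coeff_jacobiOp (n : ℕ) (A : ℝ) (p : ℝ[X]) (j : ℕ) :
    (jacobiOp n A p).coeff j
      = ((j : ℝ) + 1) * (j + 2) * p.coeff (j + 2)
        + ((n : ℝ) - j) * (n + j + 2 * A + 1) * p.coeff j := by
  have h : (jacobiOp n A p) = derivative (derivative p) - derivative (derivative p) * X ^ 2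
      - C (2 * A + 2) * (derivative p * X ^ 1) + C ((n : ℝ) * (n + 2 * A + 1)) * p := by
    simp only [jacobiOp, LinearMap.coe_mk, AddHom.coe_mk]; ring
  rw [h]
  rcases j with _ | _ | j <;>
  simp only [coeff_add, coeff_sub, coeff_C_mul, coeff_mul_X_pow', coeff_derivative] <;>
  split_ifs <;> first | omega | ((try simp only [Nat.add_one_sub_one]); push_cast; ring)

theorem eq_zero_of_jacobiOp_eq_zero {n : ℕ} {A : ℝ} (hA : 0 < 2 * A + 1) {p : ℝ[X]}
    (hp : jacobiOp n A p = 0) (hn : p.coeff n = 0) : p = 0 := by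
  suffices h : ∀ t j, p.natDegree + 1 - j ≤ t → p.coeff j = 0 from
    ext fun j => h _ j le_rfl
  intro t
  induction t with
  | zero => exact fun j hj => coeff_eq_zero_of_natDegree_lt (by omega)
  | succ t ih =>
    intro j hj
    rcases eq_or_ne j n with rfl | hjn
    · exact hn
    have hrel := coeff_jacobiOp n A p j
    rw [hp, coeff_zero, ih (j + 2) (by omega), mul_zero, zero_add, eq_comm] at hrel
    have hnj : (n : ℝ) - j ≠ 0 := sub_ne_zero.mpr (by exact_mod_cast hjn.symm)
    have hpos : (n : ℝ) + j + 2 * A + 1 ≠ 0 := by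
      have : (0 : ℝ) ≤ n + j := by positivity
      exact (by linarith : (0 : ℝ) < n + j + 2 * A + 1).ne'
    exact (mul_eq_zero.mp hrel).resolve_left (mul_ne_zero hnj hpos)

theorem coeff_gegenbauerPoly (n : ℕ) (A : ℝ) (j : ℕ) :
    (gegenbauerPoly n A).coeff j
      = if j ≤ n ∧ Even (n - j) then gegenbauerCoeff n A ((n - j) / 2) else 0 := by
  simp only [gegenbauerPoly, finsetSum_coeff, coeff_C_mul, coeff_X_pow]
  split_ifs with h
  · rw [Finset.sum_eq_single ((n - j) / 2)]
    · rw [if_pos (by obtain ⟨r, hr⟩ := h.2; omega), mul_one]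
    · intro k hk_mem hk
      rw [Finset.mem_range] at hk_mem
      rw [if_neg (by omega), mul_zero]
    · intro hk
      exact absurd (Finset.mem_range.mpr (by omega)) hk
  · refine Finset.sum_eq_zero fun k hk => ?_
    rw [Finset.mem_range] at hk
    rw [if_neg (fun hjk => h ⟨by omega, ⟨k, by omega⟩⟩), mul_zero]

theorem coeff_gegenbauerPoly_self (n : ℕ) (A : ℝ) : (gegenbauerPoly n A).coeff n = 1 := by
  simp [coeff_gegenbauerPoly, gegenbauerCoeff]

theorem jacobiOp_gegenbauerPoly (n : ℕ) (A : ℝ) (hA : 0 < 2 * A + 1) :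
    jacobiOp n A (gegenbauerPoly n A) = 0 := by
  ext j
  rw [coeff_zero, coeff_jacobiOp, coeff_gegenbauerPoly, coeff_gegenbauerPoly]
  by_cases h : j + 2 ≤ n ∧ Even (n - (j + 2))
  · obtain ⟨K, hK⟩ : ∃ K, n = 2 * K + j + 2 := by obtain ⟨r, hr⟩ := h.2; exact ⟨r, by omega⟩
    rw [if_pos h, if_pos ⟨by omega, ⟨K + 1, by omega⟩⟩, show (n - j) / 2 = K + 1 by omega,
      show (n - (j + 2)) / 2 = K by omega]
    have hn : (n : ℝ) = 2 * K + j + 2 := by rw [hK]; push_cast; ring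
    have hrec := gegenbauerCoeff_succ_mul (by linarith) (by omega : 2 * K + 2 ≤ n)
    rw [hn] at hrec ⊢
    linear_combination hrec
  · rw [if_neg h]
    split_ifs with h'
    · have : j = n := by
        obtain ⟨r, hr⟩ := h'.2
        by_contra hjn
        exact h ⟨by omega, ⟨r - 1, by omega⟩⟩
      subst this; ring
    · ring

def shiftedJacobiOp (n : ℕ) (A : ℝ) (p : ℝ[X]) : ℝ[X] :=
  -((X ^ 2 + 2 * X) * derivative (derivative p)) - C (2 * A + 2) * (X + 1) * derivative p
    + C ((n : ℝ) * (n + 2 * A + 1)) * p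

theorem coeff_shiftedJacobiOp (n : ℕ) (A : ℝ) (p : ℝ[X]) (j : ℕ) :
    (shiftedJacobiOp n A p).coeff j
      = -2 * ((j : ℝ) + 1) * (j + A + 1) * p.coeff (j + 1)
        + ((n : ℝ) - j) * (n + j + 2 * A + 1) * p.coeff j := by
  have h : shiftedJacobiOp n A p = -(derivative (derivative p) * X ^ 2
      + C 2 * (derivative (derivative p) * X ^ 1)) - C (2 * A + 2) * (derivative p * X ^ 1
      + derivative p) + C ((n : ℝ) * (n + 2 * A + 1)) * p := by
    simp only [shiftedJacobiOp, map_ofNat]; ring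
  rw [h]
  rcases j with _ | _ | j <;>
  simp only [coeff_add, coeff_sub, coeff_neg, coeff_C_mul, coeff_mul_X_pow', coeff_derivative] <;>
  split_ifs <;> first | omega | ((try simp only [Nat.add_one_sub_one]); push_cast; ring)

theorem jacobiOp_comp_X_sub_one (n : ℕ) (A : ℝ) (p : ℝ[X]) :
    jacobiOp n A (p.comp (X - 1)) = (shiftedJacobiOp n A p).comp (X - 1) := by
  have hd : ∀ q : ℝ[X], derivative (q.comp (X - 1)) = (derivative q).comp (X - 1) := fun q => by
    simp [derivative_comp]
  simp only [jacobiOp, shiftedJacobiOp, LinearMap.coe_mk, AddHom.coe_mk, hd, add_comp, sub_comp,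
    neg_comp, mul_comp, C_comp, X_comp, pow_comp, one_comp, ofNat_comp]
  ring

def jacobiShiftedCoeff (n : ℕ) (A : ℝ) (k : ℕ) : ℝ :=
  n.choose k * (Real.Gamma (A + A + n + k + 1) / Real.Gamma (A + k + 1)) * (1 / 2) ^ k

def jacobiPoly (n : ℕ) (A : ℝ) : ℝ[X] :=
  C (Real.Gamma (A + n + 1) / (n.factorial * Real.Gamma (A + A + n + 1)))
    * (∑ k ∈ Finset.range (n + 1), C (jacobiShiftedCoeff n A k) * X ^ k).comp (X - 1)

theorem eval_jacobiPoly (n : ℕ) (A s : ℝ) : (jacobiPoly n A).eval s = jacobiP A A n s := by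
  simp only [jacobiPoly, jacobiP, jacobiShiftedCoeff, eval_mul, eval_C, eval_comp,
    eval_finsetSum, eval_pow, eval_X, eval_sub, eval_one, div_pow, one_pow]
  congr 1
  exact Finset.sum_congr rfl fun _ _ => by ring

theorem coeff_sum_jacobiShiftedCoeff (n : ℕ) (A : ℝ) (j : ℕ) :
    (∑ k ∈ Finset.range (n + 1), C (jacobiShiftedCoeff n A k) * X ^ k).coeff j
      = jacobiShiftedCoeff n A j := by
  simp only [finsetSum_coeff, coeff_C_mul, coeff_X_pow, mul_ite, mul_one, mul_zero,
    Finset.sum_ite_eq, Finset.mem_range]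
  split_ifs with h
  · rfl
  · simp [jacobiShiftedCoeff, Nat.choose_eq_zero_of_lt (by omega : n < j)]

theorem shiftedJacobiOp_sum_jacobiShiftedCoeff (n : ℕ) {A : ℝ} (hA : 0 < 2 * A + 1) :
    shiftedJacobiOp n A (∑ k ∈ Finset.range (n + 1), C (jacobiShiftedCoeff n A k) * X ^ k) = 0 := by
  ext j
  rw [coeff_zero, coeff_shiftedJacobiOp, coeff_sum_jacobiShiftedCoeff,
    coeff_sum_jacobiShiftedCoeff]
  rcases lt_or_ge j n with hj | hj
  · have hj0 : (0 : ℝ) ≤ j := j.cast_nonneg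
    have h1 : 0 < A + j + 1 := by linarith
    have h2 : 0 < A + A + n + j + 1 := by have : (j : ℝ) < n := mod_cast hj; linarith
    have hchoose : (n.choose (j + 1) : ℝ) = n.choose j * (n - j) / (j + 1) := by
      rw [eq_div_iff (by positivity), ← Nat.cast_sub hj.le]
      exact_mod_cast Nat.choose_succ_right_eq n j
    rw [jacobiShiftedCoeff, jacobiShiftedCoeff, hchoose, Nat.cast_succ, ← add_assoc,
      Real.Gamma_add_one h2.ne', show A + ((j : ℝ) + 1) + 1 = A + j + 1 + 1 by ring,
      Real.Gamma_add_one h1.ne']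
    field_simp
    ring
  · rw [jacobiShiftedCoeff, Nat.choose_eq_zero_of_lt (by omega : n < j + 1)]
    rcases hj.eq_or_lt with rfl | hj
    · ring
    · rw [jacobiShiftedCoeff, Nat.choose_eq_zero_of_lt hj]
      ring

theorem jacobiOp_jacobiPoly (n : ℕ) {A : ℝ} (hA : 0 < 2 * A + 1) :
    jacobiOp n A (jacobiPoly n A) = 0 := by
  rw [jacobiPoly, ← smul_eq_C_mul, map_smul, jacobiOp_comp_X_sub_one,
    shiftedJacobiOp_sum_jacobiShiftedCoeff n hA, zero_comp, smul_zero]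

theorem coeff_jacobiPoly_self_pos (n : ℕ) {A : ℝ} (hA : 0 < 2 * A + 1) :
    0 < (jacobiPoly n A).coeff n := by
  have hX : (X - 1 : ℝ[X]) = X + C (-1) := by simp [sub_eq_add_neg]
  simp only [jacobiPoly, coeff_C_mul, sum_comp, mul_comp, C_comp, pow_comp, X_comp, hX,
    finsetSum_coeff, coeff_X_add_C_pow]
  rw [Finset.sum_eq_single n (fun k hk hkn => by
    rw [Nat.choose_eq_zero_of_lt (by rw [Finset.mem_range] at hk; omega)]; simp) (by simp)]
  have hn : (0 : ℝ) ≤ n := n.cast_nonneg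
  have h1 := Real.Gamma_pos_of_pos (by linarith : 0 < A + n + 1)
  have h2 := Real.Gamma_pos_of_pos (by linarith : 0 < A + A + n + 1)
  have h3 := Real.Gamma_pos_of_pos (by linarith : 0 < A + A + n + n + 1)
  simp only [jacobiShiftedCoeff, Nat.choose_self, Nat.sub_self, pow_zero, Nat.cast_one, one_mul,
    mul_one]
  positivity

theorem jacobiP_eq_mul_eval_gegenbauerPoly (n : ℕ) {A : ℝ} (hA : 0 < 2 * A + 1) :
    ∃ c > 0, ∀ s, jacobiP A A n s = c * (gegenbauerPoly n A).eval s := by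
  have hJ : jacobiPoly n A = C ((jacobiPoly n A).coeff n) * gegenbauerPoly n A := by
    rw [← sub_eq_zero]
    refine eq_zero_of_jacobiOp_eq_zero (n := n) hA ?_ ?_
    · rw [map_sub, ← smul_eq_C_mul, map_smul, jacobiOp_jacobiPoly n hA,
        jacobiOp_gegenbauerPoly n A hA, smul_zero, sub_zero]
    · rw [coeff_sub, coeff_C_mul, coeff_gegenbauerPoly_self, mul_one, sub_self]
  refine ⟨_, coeff_jacobiPoly_self_pos n hA, fun s => ?_⟩
  simpa only [eval_mul, eval_C, eval_jacobiPoly] using congrArg (eval s) hJ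

end Polynomial

theorem sum_sum_mul_sum_nonneg {R ι κ : Type*} [CommRing R] [PartialOrder R] [IsOrderedRing R]
    [Fintype ι] {M : ι → ι → R} (hM : ∀ c : ι → R, 0 ≤ ∑ i, ∑ j, c i * c j * M i j)
    (s : Finset κ) {w : κ → R} (hw : ∀ a ∈ s, 0 ≤ w a) (f : ι → κ → R) :
    0 ≤ ∑ i, ∑ j, M i j * ∑ a ∈ s, w a * f i a * f j a := by
  have h : ∑ i, ∑ j, M i j * ∑ a ∈ s, w a * f i a * f j a
      = ∑ a ∈ s, w a * ∑ i, ∑ j, f i a * f j a * M i j := by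
    symm
    simp only [Finset.mul_sum]
    rw [Finset.sum_comm]
    refine Finset.sum_congr rfl fun i _ => ?_
    rw [Finset.sum_comm]
    exact Finset.sum_congr rfl fun j _ => Finset.sum_congr rfl fun a _ => by ring
  rw [h]
  exact Finset.sum_nonneg fun a ha => mul_nonneg (hw a ha) (hM fun i => f i a)

theorem sum_sum_mul_mul_mul_nonneg {R ι : Type*} [CommRing R] [LinearOrder R]
    [IsStrictOrderedRing R] [Fintype ι] (u c : ι → R) :
    0 ≤ ∑ i, ∑ j, c i * c j * (u i * u j) := by
  have h : ∑ i, ∑ j, c i * c j * (u i * u j) = (∑ i, c i * u i) ^ 2 := by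
    rw [sq, Finset.sum_mul_sum]
    exact Finset.sum_congr rfl fun i _ => Finset.sum_congr rfl fun j _ => by ring
  rw [h]
  positivity

theorem one_le_card_of_dotProduct_self_eq_one {σ : Type*} [Fintype σ] {x : σ → ℝ}
    (hx : x ⬝ᵥ x = 1) :
    1 ≤ Fintype.card σ := by
  obtain ⟨i, -, -⟩ := Finset.exists_ne_zero_of_sum_ne_zero (hx.trans_ne one_ne_zero)
  exact Fintype.card_pos_iff.mpr ⟨i⟩

namespace MvPolynomial

variable {σ : Type*}

theorem pderiv_two (i : σ) : pderiv i (2 : MvPolynomial σ ℝ) = 0 := by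
  simpa using (pderiv i).map_natCast 2

variable [Fintype σ]

def fischerWeight (a : σ →₀ ℕ) : ℝ := ∏ i, ((a i).factorial : ℝ)

theorem fischerWeight_pos (a : σ →₀ ℕ) : 0 < fischerWeight a :=
  prod_pos fun i _ => mod_cast (a i).factorial_pos

theorem fischerWeight_add_single (a : σ →₀ ℕ) (i : σ) :
    fischerWeight (a + Finsupp.single i 1) = (a i + 1) * fischerWeight a := by
  classical
  have h : ∀ j, (((a + Finsupp.single i 1 : σ →₀ ℕ) j).factorial : ℝ)
      = (if j = i then (a i + 1 : ℝ) else 1) * (a j).factorial := by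
    intro j
    by_cases hj : j = i
    · subst hj; simp [Nat.factorial_succ]
    · simp [hj]
  simp only [fischerWeight, h, prod_mul_distrib, prod_ite_eq', mem_univ, if_true]

theorem sum_support_fischerWeight_eq_of_subset (p q : MvPolynomial σ ℝ) {S : Finset (σ →₀ ℕ)}
    (hS : p.support ⊆ S) :
    ∑ a ∈ p.support, fischerWeight a * coeff a p * coeff a q
      = ∑ a ∈ S, fischerWeight a * coeff a p * coeff a q :=
  sum_subset hS fun a _ ha => by simp [notMem_support_iff.mp ha]

def fischer : LinearMap.BilinForm ℝ (MvPolynomial σ ℝ) :=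
  LinearMap.mk₂ ℝ (fun p q => ∑ a ∈ p.support, fischerWeight a * coeff a p * coeff a q)
    (fun p q r => by
      classical
      rw [sum_support_fischerWeight_eq_of_subset _ _ support_add,
        sum_support_fischerWeight_eq_of_subset p _ subset_union_left,
        sum_support_fischerWeight_eq_of_subset q _ subset_union_right, ← sum_add_distrib]
      simp only [coeff_add]; exact sum_congr rfl fun _ _ => by ring)
    (fun c p q => by
      rw [sum_support_fischerWeight_eq_of_subset _ _ support_smul, smul_eq_mul, mul_sum]
      simp only [coeff_smul, smul_eq_mul]; exact sum_congr rfl fun _ _ => by ring)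
    (fun p q r => by
      simp only [coeff_add, ← sum_add_distrib]; exact sum_congr rfl fun _ _ => by ring)
    (fun c p q => by
      simp only [coeff_smul, smul_eq_mul, mul_sum]; exact sum_congr rfl fun _ _ => by ring)

theorem fischer_apply_of_support_subset {p : MvPolynomial σ ℝ} (q : MvPolynomial σ ℝ)
    {S : Finset (σ →₀ ℕ)} (hS : p.support ⊆ S) :
    fischer p q = ∑ a ∈ S, fischerWeight a * coeff a p * coeff a q :=
  sum_support_fischerWeight_eq_of_subset p q hS

theorem fischer_comm (p q : MvPolynomial σ ℝ) : fischer p q = fischer q p := by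
  classical
  rw [fischer_apply_of_support_subset q subset_union_left,
    fischer_apply_of_support_subset p (subset_union_right (s₁ := p.support))]
  exact sum_congr rfl fun _ _ => by ring

theorem fischer_one_left (q : MvPolynomial σ ℝ) : fischer 1 q = coeff 0 q := by
  classical
  rw [fischer_apply_of_support_subset q (support_one (σ := σ) (R := ℝ)).subset]
  simp [fischerWeight]

theorem fischer_X_mul (i : σ) (p q : MvPolynomial σ ℝ) :
    fischer (X i * p) q = fischer p (pderiv i q) := by
  rw [fischer_apply_of_support_subset q subset_rfl, support_X_mul, sum_map,
    fischer_apply_of_support_subset _ subset_rfl]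
  refine sum_congr rfl fun a _ => ?_
  rw [addLeftEmbedding_apply, coeff_X_mul, add_comm, fischerWeight_add_single, coeff_pderiv]
  ring

variable (σ) in
def normSq : MvPolynomial σ ℝ := ∑ i, X i ^ 2

def linearForm (y : σ → ℝ) : MvPolynomial σ ℝ := ∑ i, y i • X i

def dirDeriv (y : σ → ℝ) : Derivation ℝ (MvPolynomial σ ℝ) (MvPolynomial σ ℝ) :=
  ∑ i, y i • pderiv i

def laplacian : Module.End ℝ (MvPolynomial σ ℝ) :=
  ∑ i, (pderiv i).toLinearMap * (pderiv i).toLinearMap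

theorem laplacian_apply (p : MvPolynomial σ ℝ) :
    laplacian p = ∑ i, pderiv i (pderiv i p) := by
  simp [laplacian]

theorem dirDeriv_apply (y : σ → ℝ) (p : MvPolynomial σ ℝ) :
    dirDeriv y p = ∑ i, y i • pderiv i p := by
  rw [dirDeriv, ← Derivation.coeFnAddMonoidHom_apply, map_sum, Finset.sum_apply]
  rfl

theorem fischer_pow_mul_of_adjoint {f : MvPolynomial σ ℝ} {T : Module.End ℝ (MvPolynomial σ ℝ)}
    (hT : ∀ p q, fischer (f * p) q = fischer p (T q)) (k : ℕ) (p q : MvPolynomial σ ℝ) :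
    fischer (f ^ k * p) q = fischer p ((T ^ k) q) := by
  induction k generalizing p q with
  | zero => simp
  | succ k ih => rw [pow_succ, mul_assoc, ih, hT, pow_succ', Module.End.mul_apply]

theorem fischer_normSq_mul (p q : MvPolynomial σ ℝ) :
    fischer (normSq σ * p) q = fischer p (laplacian q) := by
  simp only [normSq, laplacian_apply, sum_mul, map_sum, LinearMap.sum_apply, sq, mul_assoc,
    fischer_X_mul]

theorem fischer_linearForm_mul (y : σ → ℝ) (p q : MvPolynomial σ ℝ) :
    fischer (linearForm y * p) q = fischer p (dirDeriv y q) := by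
  simp only [linearForm, dirDeriv_apply, sum_mul, map_sum, LinearMap.sum_apply, smul_mul_assoc,
    map_smul, LinearMap.smul_apply, fischer_X_mul]

theorem linearForm_eq_sum_C_mul_X (y : σ → ℝ) : linearForm y = ∑ i, C (y i) * X i := by
  simp [linearForm, smul_eq_C_mul]

theorem pderiv_linearForm (i : σ) (y : σ → ℝ) : pderiv i (linearForm y) = C (y i) := by
  classical
  simp [linearForm, pderiv_X, Pi.single_apply, smul_eq_C_mul]

theorem pderiv_normSq (i : σ) : pderiv i (normSq σ) = 2 * X i := by
  classical
  simp [normSq, pderiv_X, Pi.single_apply]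

theorem dirDeriv_linearForm (x y : σ → ℝ) : dirDeriv y (linearForm x) = C (y ⬝ᵥ x) := by
  simp [dirDeriv_apply, pderiv_linearForm, dotProduct, smul_eq_C_mul]

theorem normSq_def : normSq σ = ∑ i, X i ^ 2 := rfl

theorem laplacian_mul (p q : MvPolynomial σ ℝ) :
    laplacian (p * q)
      = laplacian p * q + 2 * ∑ i, pderiv i p * pderiv i q + p * laplacian q := by
  simp only [laplacian_apply, Derivation.leibniz, smul_eq_mul, map_add, sum_mul, mul_sum,
    ← sum_add_distrib]
  exact Finset.sum_congr rfl fun _ _ => by ring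

theorem laplacian_linearForm_pow (y : σ → ℝ) (m : ℕ) :
    laplacian (linearForm y ^ m)
      = C ((m : ℝ) * (m - 1) * (y ⬝ᵥ y)) * linearForm y ^ (m - 2) := by
  rcases m with _ | _ | m
  · simp [laplacian_apply]
  · simp [laplacian_apply, pderiv_linearForm]
  · simp only [laplacian_apply, pderiv_pow, pderiv_linearForm, Derivation.leibniz, pderiv_C,
      Derivation.map_natCast, smul_eq_mul, dotProduct, map_mul, map_sum, map_sub, map_natCast,
      map_one]
    rw [Finset.mul_sum, Finset.sum_mul]
    refine Finset.sum_congr rfl fun _ _ => ?_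
    simp only [Nat.add_sub_cancel, show m + 1 + 1 - 2 = m by omega]
    push_cast
    ring

theorem laplacian_normSq_pow (k : ℕ) :
    laplacian (normSq σ ^ k)
      = C (2 * (k : ℝ) * (2 * k + Fintype.card σ - 2)) * normSq σ ^ (k - 1) := by
  rcases k with _ | _ | k
  · simp [laplacian_apply]
  · simp [laplacian_apply, pderiv_normSq, pderiv_two, mul_comm, map_ofNat]
  · have h : ∀ i : σ, pderiv i (pderiv i (normSq σ ^ (k + 2)))
        = 2 * ((k : MvPolynomial σ ℝ) + 2) * normSq σ ^ (k + 1)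
          + 4 * ((k : MvPolynomial σ ℝ) + 2) * ((k : MvPolynomial σ ℝ) + 1) * normSq σ ^ k
            * X i ^ 2 := by
      intro i
      simp [pderiv_normSq, pderiv_two, Derivation.leibniz]
      ring
    rw [laplacian_apply, Finset.sum_congr rfl fun i _ => h i, Finset.sum_add_distrib,
      Finset.sum_const, ← Finset.mul_sum, ← normSq_def, Finset.card_univ]
    simp only [map_mul, map_sub, map_add, map_ofNat, map_natCast, nsmul_eq_mul]
    push_cast
    ring

theorem sum_pderiv_normSq_pow_mul_pderiv_linearForm_pow (y : σ → ℝ) (k m : ℕ) :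
    ∑ i, pderiv i (normSq σ ^ k) * pderiv i (linearForm y ^ m)
      = C (2 * (k : ℝ) * m) * (normSq σ ^ (k - 1) * linearForm y ^ m) := by
  rcases k with _ | k
  · simp
  rcases m with _ | m
  · simp
  have h : ∀ i, pderiv i (normSq σ ^ (k + 1)) * pderiv i (linearForm y ^ (m + 1))
      = C (2 * ((k : ℝ) + 1) * (m + 1)) * (normSq σ ^ k * linearForm y ^ m) * (C (y i) * X i) := by
    intro i
    simp only [pderiv_pow, pderiv_normSq, pderiv_linearForm, Nat.add_sub_cancel, map_mul,
      map_add, map_one, map_ofNat, map_natCast]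
    push_cast
    ring
  rw [Finset.sum_congr rfl fun i _ => h i, ← Finset.mul_sum, ← linearForm_eq_sum_C_mul_X]
  push_cast
  ring

theorem laplacian_normSq_pow_mul_linearForm_pow (y : σ → ℝ) (k m : ℕ) :
    laplacian (normSq σ ^ k * linearForm y ^ m)
      = C (2 * (k : ℝ) * (2 * k + Fintype.card σ - 2 + 2 * m))
          * (normSq σ ^ (k - 1) * linearForm y ^ m)
        + C ((m : ℝ) * (m - 1) * (y ⬝ᵥ y)) * (normSq σ ^ k * linearForm y ^ (m - 2)) := by
  rw [laplacian_mul, laplacian_normSq_pow, laplacian_linearForm_pow,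
    sum_pderiv_normSq_pow_mul_pderiv_linearForm_pow]
  simp only [map_mul, map_add, map_sub, map_ofNat, map_natCast]
  ring

theorem laplacian_pow_linearForm_pow (y : σ → ℝ) (k m : ℕ) :
    (laplacian ^ k) (linearForm y ^ (m + 2 * k))
      = C ((m + 2 * k).descFactorial (2 * k) * (y ⬝ᵥ y) ^ k) * linearForm y ^ m := by
  induction k with
  | zero => simp
  | succ k ih =>
    rw [pow_succ, Module.End.mul_apply, show m + 2 * (k + 1) = m + 2 * k + 2 by ring,
      laplacian_linearForm_pow, Nat.add_sub_cancel, C_mul', map_smul, ih, smul_eq_C_mul,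
      ← mul_assoc, ← C_mul, show 2 * (k + 1) = 2 * k + 1 + 1 by ring, Nat.succ_descFactorial_succ,
      Nat.succ_descFactorial_succ]
    push_cast
    ring_nf

theorem dirDeriv_pow_linearForm_pow (x y : σ → ℝ) (m : ℕ) :
    ((dirDeriv y : Module.End ℝ (MvPolynomial σ ℝ)) ^ m) (linearForm x ^ m)
      = C (m.factorial * (y ⬝ᵥ x) ^ m) := by
  induction m with
  | zero => simp
  | succ m ih =>
    rw [pow_succ, Module.End.mul_apply, Derivation.coeFn_coe, Derivation.leibniz_pow,
      dirDeriv_linearForm, Nat.add_sub_cancel, smul_eq_mul, mul_comm, ← smul_eq_C_mul,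
      ← Nat.cast_smul_eq_nsmul ℝ, smul_smul, map_smul, ih, smul_eq_C_mul, ← C_mul]
    push_cast [Nat.factorial_succ]
    ring_nf

theorem fischer_linearForm_pow (x y : σ → ℝ) (m : ℕ) :
    fischer (linearForm x ^ m) (linearForm y ^ m) = m.factorial * (x ⬝ᵥ y) ^ m := by
  rw [← mul_one (linearForm x ^ m), fischer_pow_mul_of_adjoint (fischer_linearForm_mul x),
    fischer_one_left, dirDeriv_pow_linearForm_pow, coeff_zero_C]

/-- The harmonic projection of `⟨x, u⟩ⁿ` when `|x| = 1`. With `N = card σ`, the Jacobi parameter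
of the sphere `S^(N-1)` is `A = (N - 3) / 2`. -/
def zonalHarmonic (n : ℕ) (x : σ → ℝ) : MvPolynomial σ ℝ :=
  ∑ k ∈ range (n / 2 + 1), C (gegenbauerCoeff n ((Fintype.card σ - 3) / 2) k)
    * (normSq σ ^ k * linearForm x ^ (n - 2 * k))

theorem laplacian_zonalHarmonic (n : ℕ) {x : σ → ℝ} (hx : x ⬝ᵥ x = 1) :
    laplacian (zonalHarmonic n x) = 0 := by
  set A : ℝ := (Fintype.card σ - 3) / 2 with hA
  set μ := gegenbauerCoeff n A
  have hN : (1 : ℝ) ≤ Fintype.card σ := mod_cast one_le_card_of_dotProduct_self_eq_one hx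
  have hterm : ∀ k, laplacian (C (μ k) * (normSq σ ^ k * linearForm x ^ (n - 2 * k)))
      = C (μ k * (2 * k * (2 * k + Fintype.card σ - 2 + 2 * (n - 2 * k : ℕ))))
          * (normSq σ ^ (k - 1) * linearForm x ^ (n - 2 * k))
        + C (μ k * ((n - 2 * k : ℕ) * ((n - 2 * k : ℕ) - 1)))
          * (normSq σ ^ k * linearForm x ^ (n - 2 * k - 2)) := by
    intro k
    rw [C_mul', map_smul, laplacian_normSq_pow_mul_linearForm_pow, hx, mul_one, smul_add,
      smul_eq_C_mul, smul_eq_C_mul]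
    simp only [map_mul]
    ring
  rw [zonalHarmonic, map_sum, Finset.sum_congr rfl fun k _ => hterm k, Finset.sum_add_distrib,
    Finset.sum_range_succ', Finset.sum_range_succ _ (n / 2)]
  have hn : (n - 2 * (n / 2) : ℕ) = 0 ∨ (n - 2 * (n / 2) : ℕ) = 1 := by omega
  have hlast : (((n - 2 * (n / 2) : ℕ) : ℝ) * ((n - 2 * (n / 2) : ℕ) - 1)) = 0 := by
    rcases hn with hn | hn <;> simp [hn]
  simp only [hlast, Nat.cast_zero, mul_zero, zero_mul, map_zero, add_zero,
    ← Finset.sum_add_distrib]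
  -- the `|u|^(2k) ⟨x, u⟩^(n-2k-2)` parts of the terms `k` and `k + 1` cancel
  refine Finset.sum_eq_zero fun k hk => ?_
  have hk : 2 * k + 2 ≤ n := by rw [Finset.mem_range] at hk; omega
  have c1 : ((n - 2 * k : ℕ) : ℝ) = n - 2 * k := by
    rw [Nat.cast_sub (by omega), Nat.cast_mul, Nat.cast_ofNat]
  have c2 : ((n - 2 * k - 2 : ℕ) : ℝ) = n - 2 * k - 2 := by
    rw [Nat.cast_sub (by omega), c1, Nat.cast_ofNat]
  have hcoeff : μ (k + 1) * (2 * (k + 1 : ℕ) * (2 * (k + 1 : ℕ) + Fintype.card σ - 2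
      + 2 * (n - 2 * k - 2 : ℕ))) + μ k * ((n - 2 * k : ℕ) * ((n - 2 * k : ℕ) - 1)) = 0 := by
    rw [c1, c2]
    push_cast
    linear_combination
      gegenbauerCoeff_succ_mul (by linarith) hk + (2 * (k + 1) * μ (k + 1)) * hA
  rw [Nat.add_sub_cancel, show n - 2 * (k + 1) = n - 2 * k - 2 by omega, ← add_mul, ← C_add,
    hcoeff, C_0, zero_mul]

theorem fischer_zonalHarmonic_left (n : ℕ) (x : σ → ℝ) (q : MvPolynomial σ ℝ)
    (hq : laplacian q = 0) : fischer (zonalHarmonic n x) q = fischer (linearForm x ^ n) q := by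
  have hpow : ∀ k, (laplacian ^ k) q = if k = 0 then q else 0 := by
    rintro (_ | k)
    · simp
    · simp [pow_succ, hq]
  simp only [zonalHarmonic, map_sum, LinearMap.sum_apply, C_mul', map_smul, LinearMap.smul_apply,
    fischer_pow_mul_of_adjoint fischer_normSq_mul, hpow, apply_ite, map_zero]
  rw [Finset.sum_eq_single 0 (fun k _ hk => by simp [hk]) (by simp)]
  simp [gegenbauerCoeff]

theorem fischer_zonalHarmonic_linearForm_pow (n : ℕ) {x : σ → ℝ} (hx : x ⬝ᵥ x = 1)
    (y : σ → ℝ) : fischer (zonalHarmonic n y) (linearForm x ^ n)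
      = n.factorial * (gegenbauerPoly n ((Fintype.card σ - 3) / 2)).eval (x ⬝ᵥ y) := by
  simp only [zonalHarmonic, gegenbauerPoly, map_sum, LinearMap.sum_apply, C_mul', map_smul,
    LinearMap.smul_apply, fischer_pow_mul_of_adjoint fischer_normSq_mul, Polynomial.eval_finsetSum,
    Finset.mul_sum, smul_eq_mul]
  refine Finset.sum_congr rfl fun k hk => ?_
  have hk : 2 * k ≤ n := by rw [Finset.mem_range] at hk; omega
  rw [show linearForm x ^ n = linearForm x ^ (n - 2 * k + 2 * k) by rw [Nat.sub_add_cancel hk],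
    laplacian_pow_linearForm_pow, hx, one_pow, mul_one, ← smul_eq_C_mul, map_smul,
    fischer_linearForm_pow, Nat.sub_add_cancel hk, dotProduct_comm]
  simp only [Polynomial.eval_mul, Polynomial.eval_C, Polynomial.eval_pow, Polynomial.eval_X,
    smul_eq_mul]
  rw [← Nat.factorial_mul_descFactorial hk]
  push_cast
  ring

theorem fischer_zonalHarmonic (n : ℕ) {x y : σ → ℝ} (hx : x ⬝ᵥ x = 1) (hy : y ⬝ᵥ y = 1) :
    fischer (zonalHarmonic n x) (zonalHarmonic n y)
      = n.factorial * (gegenbauerPoly n ((Fintype.card σ - 3) / 2)).eval (x ⬝ᵥ y) := by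
  rw [fischer_zonalHarmonic_left n x _ (laplacian_zonalHarmonic n hy), fischer_comm,
    fischer_zonalHarmonic_linearForm_pow n hx]

theorem sum_sum_mul_fischer_nonneg {ι : Type*} [Fintype ι] {M : ι → ι → ℝ}
    (hM : ∀ c : ι → ℝ, 0 ≤ ∑ i, ∑ j, c i * c j * M i j) (p : ι → MvPolynomial σ ℝ) :
    0 ≤ ∑ i, ∑ j, M i j * fischer (p i) (p j) := by
  classical
  have h : ∀ i j, fischer (p i) (p j) = ∑ a ∈ Finset.univ.biUnion fun i => (p i).support,
      fischerWeight a * coeff a (p i) * coeff a (p j) := fun i j =>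
    fischer_apply_of_support_subset _
      (Finset.subset_biUnion_of_mem (fun i => (p i).support) (Finset.mem_univ i))
  simp only [h]
  exact sum_sum_mul_sum_nonneg hM _ (fun a _ => (fischerWeight_pos a).le) _

theorem sum_sum_mul_eval_gegenbauerPoly_nonneg {ι : Type*} [Fintype ι] {M : ι → ι → ℝ}
    (hM : ∀ c : ι → ℝ, 0 ≤ ∑ i, ∑ j, c i * c j * M i j) (n : ℕ) {x : ι → σ → ℝ}
    (hx : ∀ i, x i ⬝ᵥ x i = 1) :
    0 ≤ ∑ i, ∑ j, M i j * (gegenbauerPoly n ((Fintype.card σ - 3) / 2)).eval (x i ⬝ᵥ x j) := by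
  have h := sum_sum_mul_fischer_nonneg hM fun i => zonalHarmonic n (x i)
  simp only [fischer_zonalHarmonic n (hx _) (hx _), mul_left_comm (M _ _), ← Finset.mul_sum] at h
  exact nonneg_of_mul_nonneg_right h (by positivity)

end MvPolynomial

namespace StationaryCov

variable {T : Type*} {m : ℕ}

theorem sum_sum_mul_dotProduct_mulVec_nonneg [Neg T] [Sub T] {B : T → Matrix (Fin m) (Fin m) ℝ}
    (hB : StationaryCov B) {k : ℕ} (t : Fin k → T) (a : Fin k → Fin m → ℝ) (c : Fin k → ℝ) :
    0 ≤ ∑ i, ∑ j, c i * c j * (a i ⬝ᵥ (B (t i - t j) *ᵥ a j)) := by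
  convert hB.2 k t fun i => c i • a i using 3 with i _ j _
  rw [Matrix.mulVec_smul, smul_dotProduct, dotProduct_smul, smul_eq_mul, smul_eq_mul]
  ring

theorem abs_apply_le [AddGroup T] {B : T → Matrix (Fin m) (Fin m) ℝ} (hB : StationaryCov B)
    (t : T) (i j : Fin m) : |B t i j| ≤ (B 0 i i + B 0 j j) / 2 := by
  have h : ∀ ε : ℝ, 0 ≤ B 0 i i + 2 * ε * B t i j + ε ^ 2 * B 0 j j := by
    intro ε
    have := sum_sum_mul_dotProduct_mulVec_nonneg hB ![t, 0] ![Pi.single i 1, Pi.single j 1] ![1, ε]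
    simp [Fin.sum_univ_two, hB.1 t, Matrix.mulVec_single, single_dotProduct] at this
    linarith
  have h₁ := h 1
  have h₂ := h (-1)
  norm_num at h₁ h₂
  exact abs_le.mpr ⟨by linarith, by linarith⟩

theorem apply_zero_self_nonneg [AddGroup T] {B : T → Matrix (Fin m) (Fin m) ℝ}
    (hB : StationaryCov B) (i : Fin m) : 0 ≤ B 0 i i := by
  linarith [abs_nonneg (B 0 i i), abs_apply_le hB 0 i i]

theorem summable_diag_mul [AddGroup T] {B : ℕ → T → Matrix (Fin m) (Fin m) ℝ}
    (hB : ∀ n, StationaryCov (B n)) {w : ℕ → ℝ} (hw : ∀ n, 0 ≤ w n) (i : Fin m)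
    (h : ∃ L, SeriesConv (fun n => B n 0 i i * w n) L) : Summable fun n => B n 0 i i * w n := by
  obtain ⟨L, hL⟩ := h
  have hnonneg : ∀ n, 0 ≤ B n 0 i i * w n := fun n =>
    mul_nonneg (apply_zero_self_nonneg (hB n) i) (hw n)
  exact ((hasSum_iff_tendsto_nat_of_nonneg hnonneg L).mpr hL).summable

theorem summable_abs_mul [AddGroup T] {B : ℕ → T → Matrix (Fin m) (Fin m) ℝ}
    (hB : ∀ n, StationaryCov (B n)) {v w : ℕ → ℝ} (hvw : ∀ n, |v n| ≤ w n)
    (hdiag : ∀ i, Summable fun n => B n 0 i i * w n) (t : T) (i j : Fin m) :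
    Summable fun n => |B n t i j * v n| := by
  refine Summable.of_nonneg_of_le (fun n => abs_nonneg _) (fun n => ?_)
    (((hdiag i).add (hdiag j)).div_const 2)
  have hB' := abs_apply_le (hB n) t i j
  calc |B n t i j * v n| ≤ (B n 0 i i + B n 0 j j) / 2 * w n := by
        rw [abs_mul]
        exact mul_le_mul hB' (hvw n) (abs_nonneg _) ((abs_nonneg _).trans hB')
    _ = (B n 0 i i * w n + B n 0 j j * w n) / 2 := by ring

end StationaryCov

theorem dotProduct_of_mul_mulVec {ι : Type*} [Fintype ι] (M : Matrix ι ι ℝ) (c : ℝ)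
    (u v : ι → ℝ) : u ⬝ᵥ (Matrix.of (fun l r => M l r * c) *ᵥ v) = u ⬝ᵥ (M *ᵥ v) * c := by
  have h : Matrix.of (fun l r => M l r * c) = c • M := by ext; simp [mul_comm]
  rw [h, Matrix.smul_mulVec, dotProduct_smul, smul_eq_mul, mul_comm]

section Sphere

variable {σ : Type*} [Fintype σ] {A : ℝ}

theorem sum_sum_mul_jacobiP_inner_nonneg (hA : (Fintype.card σ : ℝ) = 2 * A + 3) (hA₀ : 0 ≤ A)
    {ι : Type*} [Fintype ι] {M : ι → ι → ℝ} (hM : ∀ c : ι → ℝ, 0 ≤ ∑ i, ∑ j, c i * c j * M i j)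
    (n : ℕ) {x : ι → EuclideanSpace ℝ σ} (hx : ∀ i, ‖x i‖ = 1) :
    0 ≤ ∑ i, ∑ j, M i j * jacobiP A A n ⟪x i, x j⟫ := by
  obtain ⟨c, hc, hP⟩ :=
    Polynomial.jacobiP_eq_mul_eval_gegenbauerPoly n (by linarith : 0 < 2 * A + 1)
  have hinner : ∀ y z : EuclideanSpace ℝ σ, ⟪y, z⟫ = y.ofLp ⬝ᵥ z.ofLp := fun y z => by
    rw [EuclideanSpace.inner_eq_star_dotProduct, star_trivial, dotProduct_comm]
  have hunit : ∀ i, (x i).ofLp ⬝ᵥ (x i).ofLp = 1 := fun i => by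
    rw [← hinner, real_inner_self_eq_norm_sq, hx, one_pow]
  have hA' : ((Fintype.card σ : ℝ) - 3) / 2 = A := by rw [hA]; ring
  have h := MvPolynomial.sum_sum_mul_eval_gegenbauerPoly_nonneg hM n hunit
  rw [hA'] at h
  simp only [hinner, hP, mul_left_comm (M _ _), ← Finset.mul_sum]
  exact mul_nonneg hc.le h

theorem abs_jacobiP_inner_le (hA : (Fintype.card σ : ℝ) = 2 * A + 3) (hA₀ : 0 ≤ A) (n : ℕ)
    {x y : EuclideanSpace ℝ σ} (hx : ‖x‖ = 1) (hy : ‖y‖ = 1) :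
    |jacobiP A A n ⟪x, y⟫| ≤ jacobiP A A n 1 := by
  have h : ∀ ε : ℝ,
      0 ≤ jacobiP A A n 1 + 2 * ε * jacobiP A A n ⟪x, y⟫ + ε ^ 2 * jacobiP A A n 1 := by
    intro ε
    have := sum_sum_mul_jacobiP_inner_nonneg hA hA₀ (sum_sum_mul_mul_mul_nonneg ![1, ε]) n
      (x := ![x, y]) (by simp [Fin.forall_fin_two, hx, hy])
    simp only [Fin.sum_univ_two, Matrix.cons_val_zero, Matrix.cons_val_one,
      real_inner_self_eq_norm_sq, hx, hy, one_pow, real_inner_comm x y] at this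
    linarith
  have h₁ := h 1
  have h₂ := h (-1)
  norm_num at h₁ h₂
  exact abs_le.mpr ⟨by linarith, by linarith⟩

theorem StationaryCov.sum_sum_dotProduct_mulVec_mul_jacobiP_nonneg
    (hA : (Fintype.card σ : ℝ) = 2 * A + 3) (hA₀ : 0 ≤ A) {T : Type*} [Neg T] [Sub T] {m : ℕ}
    {B : T → Matrix (Fin m) (Fin m) ℝ} (hB : StationaryCov B) (n : ℕ) {k : ℕ}
    {x : Fin k → EuclideanSpace ℝ σ} (hx : ∀ i, ‖x i‖ = 1) (t : Fin k → T)
    (a : Fin k → Fin m → ℝ) :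
    0 ≤ ∑ i, ∑ j, a i ⬝ᵥ (Matrix.of (fun l r => B (t i - t j) l r * jacobiP A A n ⟪x i, x j⟫)
      *ᵥ a j) := by
  simp only [dotProduct_of_mul_mulVec]
  exact sum_sum_mul_jacobiP_inner_nonneg hA hA₀
    (StationaryCov.sum_sum_mul_dotProduct_mulVec_nonneg hB t a) n hx

end Sphere

theorem sum_sum_dotProduct_mulVec_nonneg_of_hasSum {β ι κ : Type*} [Fintype ι] [Fintype κ]
    {F : β → ι → ι → Matrix κ κ ℝ} {G : ι → ι → Matrix κ κ ℝ}
    (hF : ∀ i j l r, HasSum (fun n => F n i j l r) (G i j l r)) (a : ι → κ → ℝ)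
    (hnonneg : ∀ n, 0 ≤ ∑ i, ∑ j, a i ⬝ᵥ (F n i j *ᵥ a j)) :
    0 ≤ ∑ i, ∑ j, a i ⬝ᵥ (G i j *ᵥ a j) := by
  have h : HasSum (fun n => ∑ i, ∑ j, a i ⬝ᵥ (F n i j *ᵥ a j))
      (∑ i, ∑ j, a i ⬝ᵥ (G i j *ᵥ a j)) := by
    refine hasSum_sum fun i _ => hasSum_sum fun j _ => ?_
    simp only [dotProduct, Matrix.mulVec, Finset.mul_sum]
    exact hasSum_sum fun l _ => hasSum_sum fun r _ =>
      ((hF i j l r).mul_right (a j r)).mul_left (a i l)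
  exact h.nonneg hnonneg

/-- If each `B_n` is a stationary covariance matrix function on `ℝ` and
`Σ_n B_n(0) P_n(1)` converges entrywise, then the series
`K((x₁,t₁),(x₂,t₂)) = Σ_n B_n(t₁−t₂) P_n(⟨x₁,x₂⟩)` converges entrywise absolutely
and `K` is a covariance matrix kernel on `S^d × ℝ`. -/
theorem series_is_spatio_temporal_covariance_kernel (d m : ℕ) (hd : 2 ≤ d) (α β : ℝ)
    (hα : α = ((d : ℝ) - 2) / 2) (hβ : β = ((d : ℝ) - 2) / 2)
    (B : ℕ → ℝ → Matrix (Fin m) (Fin m) ℝ)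
    (hB : ∀ n, StationaryCov (B n))
    (hBconv : ∀ i j, ∃ L, SeriesConv (fun n => B n 0 i j * jacobiP α β n 1) L) :
    ∃ K : Sph d × ℝ → Sph d × ℝ → Matrix (Fin m) (Fin m) ℝ,
      (∀ (p q : Sph d × ℝ) (i j : Fin m),
        Summable (fun n =>
          |B n (p.2 - q.2) i j * jacobiP α β n ⟪(p.1 : EucSp d), (q.1 : EucSp d)⟫|) ∧
        SeriesConv
          (fun n => B n (p.2 - q.2) i j * jacobiP α β n ⟪(p.1 : EucSp d), (q.1 : EucSp d)⟫)
          (K p q i j)) ∧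
      (∀ p q : Sph d × ℝ, (K p q).transpose = K q p) ∧
      (∀ (k : ℕ) (pt : Fin k → Sph d × ℝ) (a : Fin k → Fin m → ℝ),
        0 ≤ ∑ i, ∑ j, dotProduct (a i) ((K (pt i) (pt j)).mulVec (a j))) := by
  obtain rfl : α = β := hα.trans hβ.symm
  have hcard : (Fintype.card (Fin (d + 1)) : ℝ) = 2 * α + 3 := by
    rw [Fintype.card_fin, hα]; push_cast; ring
  have hα₀ : 0 ≤ α := by
    have : (2 : ℝ) ≤ d := mod_cast hd
    rw [hα]; linarith
  have hnorm : ∀ x : Sph d, ‖(x : EucSp d)‖ = 1 := fun x => mem_sphere_zero_iff_norm.mp x.2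
  have hP : ∀ (x y : Sph d) n, |jacobiP α α n ⟪(x : EucSp d), y⟫| ≤ jacobiP α α n 1 :=
    fun x y n => abs_jacobiP_inner_le hcard hα₀ n (hnorm x) (hnorm y)
  have hsum : ∀ (p q : Sph d × ℝ) (i j : Fin m), Summable fun n =>
      |B n (p.2 - q.2) i j * jacobiP α α n ⟪(p.1 : EucSp d), q.1⟫| := fun p q =>
    StationaryCov.summable_abs_mul hB (hP p.1 q.1) (fun l => StationaryCov.summable_diag_mul hB
      (fun n => (abs_nonneg _).trans (hP p.1 p.1 n)) l (hBconv l l)) _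
  refine ⟨fun p q => Matrix.of fun i j =>
      ∑' n, B n (p.2 - q.2) i j * jacobiP α α n ⟪(p.1 : EucSp d), q.1⟫,
    fun p q i j => ⟨hsum p q i j, (hsum p q i j).of_abs.hasSum.tendsto_sum_nat⟩,
    fun p q => ?_, fun k pt a => ?_⟩
  · ext i j
    refine tsum_congr fun n => ?_
    rw [← neg_sub, (hB n).1, Matrix.transpose_apply, real_inner_comm]
  · exact sum_sum_dotProduct_mulVec_nonneg_of_hasSum
      (fun i j l r => (hsum (pt i) (pt j) l r).of_abs.hasSum) a fun n =>
      StationaryCov.sum_sum_dotProduct_mulVec_mul_jacobiP_nonneg hcard hα₀ (hB n) n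
        (fun i => hnorm (pt i).1) (fun i => (pt i).2) a
end
end

section
/- For every real α > −1, every n ∈ ℕ, and every real y: P_{2n}^{(α,α)}(y)·P_n^{(α,−1/2)}(1) = P_n^{(α,−1/2)}(2y²−1)·P_{2n}^{(α,α)}(1). Equivalently, in terms of the normalised Jacobi polynomials R_n^{(α,β)}(x) = P_n^{(α,β)}(x)/P_n^{(α,β)}(1), one has R_{2n}^{(α,α)}(cos(θ/2)) = R_n^{(α,−1/2)}(cos θ) for all real θ. -/
open scoped BigOperators

noncomputable section

open Finset

/-!
Put `u = (y - 1) / 2`, so that `(2y² - 1 - 1) / 2 = 4u(u + 1)`. Away from the zeros of `Γ`,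
`P_n^{(a,b)}(x) = P_n^{(a,b)}(1) · ₂F₁(-n, a + b + n + 1; a + 1; -(x - 1)/2)`, so with
`c = α + n + 1/2` the theorem is Gauss's quadratic transformation
`₂F₁(-2n, 2c; α + 1; -u) = ₂F₁(-n, c; α + 1; -4u(u + 1))` for these terminating series.
Comparing coefficients of `u^k` turns it into a binomial sum identity in `k`, proved by creative
telescoping: the sum satisfies the same first-order recurrence in `k` as `C(2n, k) (2c)_k`.
-/

theorem ascPochhammer_eval_succ_left {R : Type*} [CommSemiring R] (m : ℕ) (x : R) :
    (ascPochhammer R (m + 1)).eval x = x * (ascPochhammer R m).eval (x + 1) := by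
  simp [ascPochhammer_succ_left, Polynomial.eval_comp]

theorem ascPochhammer_eval_add {R : Type*} [CommSemiring R] (s t : ℕ) (x : R) :
    (ascPochhammer R (s + t)).eval x
      = (ascPochhammer R s).eval x * (ascPochhammer R t).eval (x + s) := by
  simp [← ascPochhammer_mul, Polynomial.eval_comp]

theorem Nat.cast_choose_succ_right_mul {R : Type*} [CommRing R] (n k : ℕ) :
    (n.choose (k + 1) : R) * (k + 1) = n.choose k * (n - k) := by
  rcases le_or_gt k n with h | h
  · exact_mod_cast congrArg (Nat.cast : ℕ → R) (Nat.choose_succ_right_eq n k) |>.trans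
      (by push_cast [Nat.cast_sub h]; rfl)
  · simp [Nat.choose_eq_zero_of_lt h, Nat.choose_eq_zero_of_lt (Nat.lt_succ_of_lt h)]

theorem Nat.cast_choose_mul_succ {R : Type*} [CommRing R] (n k : ℕ) :
    (n.choose k : R) * (n + 1) = (n + 1).choose k * (n + 1 - k) := by
  rcases le_or_gt k (n + 1) with h | h
  · exact_mod_cast congrArg (Nat.cast : ℕ → R) (Nat.choose_mul_succ_eq n k) |>.trans
      (by push_cast [Nat.cast_sub h]; rfl)
  · simp [Nat.choose_eq_zero_of_lt h, Nat.choose_eq_zero_of_lt (Nat.lt_of_succ_lt h)]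

theorem Real.Gamma_add_nat_eq_mul_ascPochhammer {x : ℝ} (hx : ∀ m : ℕ, x ≠ -m) (k : ℕ) :
    Real.Gamma (x + k) = Real.Gamma x * (ascPochhammer ℝ k).eval x := by
  induction k with
  | zero => simp
  | succ k ih =>
    have hxk : x + k ≠ 0 := fun h => hx k (by linarith)
    rw [Nat.cast_succ, ← add_assoc, Real.Gamma_add_one hxk, ih, ascPochhammer_succ_eval]
    ring

theorem ne_neg_natCast_of_neg_one_lt {x : ℝ} (h : -1 < x) (h0 : x ≠ 0) (m : ℕ) : x ≠ -m := by
  rcases m with _ | m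
  · simpa using h0
  · push_cast
    linarith [m.cast_nonneg (α := ℝ)]

theorem sum_sum_choose_sub_mul_pow {R : Type*} [CommSemiring R] (n : ℕ) (g : ℕ → R)
    (hg : ∀ j, n < j → g j = 0) (u : R) :
    ∑ k ∈ range (2 * n + 1), ∑ j ∈ range (k + 1), g j * j.choose (k - j) * u ^ k
      = ∑ j ∈ range (n + 1), g j * (u * (u + 1)) ^ j := by
  have hinner : ∀ j ∈ range (n + 1),
      ∑ k ∈ Ico j (2 * n + 1), g j * j.choose (k - j) * u ^ k = g j * (u * (u + 1)) ^ j := by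
    intro j hj
    have hjn := mem_range.1 hj
    rw [sum_Ico_eq_sum_range,
      ← sum_subset (range_subset_range.2 (by omega : j + 1 ≤ 2 * n + 1 - j))
        fun i _ hi => by simp [Nat.choose_eq_zero_of_lt (by simpa using hi : j < i)]]
    simp only [add_tsub_cancel_left, mul_pow, add_pow, one_pow, mul_one, mul_sum, pow_add]
    exact sum_congr rfl fun i _ => by ring
  calc ∑ k ∈ range (2 * n + 1), ∑ j ∈ range (k + 1), g j * j.choose (k - j) * u ^ k
      = ∑ j ∈ range (2 * n + 1), ∑ k ∈ Ico j (2 * n + 1), g j * j.choose (k - j) * u ^ k := by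
        simpa only [range_eq_Ico] using (sum_Ico_Ico_comm 0 (2 * n + 1) _).symm
    _ = ∑ j ∈ range (n + 1), ∑ k ∈ Ico j (2 * n + 1), g j * j.choose (k - j) * u ^ k :=
        (sum_subset (range_subset_range.2 (by omega)) fun j _ hj => by
          simp [hg j (by simpa using hj)]).symm
    _ = ∑ j ∈ range (n + 1), g j * (u * (u + 1)) ^ j := sum_congr rfl hinner

/-- The coefficient of `u^k` in `₂F₁(-n, c; α + 1; -4u(u + 1))`, times `(α + 1)_k`, is
`∑_{j ≤ k} quadSummand α n k j`, where `c = α + n + 1/2`. -/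
def quadSummand (α : ℝ) (n k j : ℕ) : ℝ :=
  n.choose j * j.choose (k - j) * 4 ^ j * (ascPochhammer ℝ j).eval (α + n + 1 / 2) *
    (ascPochhammer ℝ (k - j)).eval (α + 1 + j)

/-- Zeilberger's certificate for `quadSummand`. -/
def quadCertificate (α : ℝ) (n k j : ℕ) : ℝ :=
  (k + 1 - 2 * j) * (α + j) * n.choose j * j.choose (k - j + 1) * 4 ^ j *
    (ascPochhammer ℝ j).eval (α + n + 1 / 2) * (ascPochhammer ℝ (k - j)).eval (α + 1 + j)

theorem quadSummand_telescope (α : ℝ) {n j k : ℕ} (hjk : j < k) :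
    (k + 1) * quadSummand α n (k + 1) j
        - (2 * n - k) * (2 * α + 2 * n + 1 + k) * quadSummand α n k j
      = quadCertificate α n k (j + 1) - quadCertificate α n k j := by
  obtain ⟨q, rfl⟩ : ∃ q, k = j + q + 1 := ⟨k - j - 1, by omega⟩
  simp only [quadSummand, quadCertificate]
  rw [show j + q + 1 + 1 - j = q + 1 + 1 by omega, show j + q + 1 - j = q + 1 by omega,
    show j + q + 1 - (j + 1) = q by omega]
  -- express every binomial through `C(n, j)` and `C(j + 1, q + 1)`: what is left is rational
  have h1 := Nat.cast_choose_succ_right_mul (R := ℝ) j (q + 1)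
  have h2 := Nat.cast_choose_mul_succ (R := ℝ) j (q + 1)
  have h3 := Nat.cast_choose_succ_right_mul (R := ℝ) n j
  rw [eq_div_of_mul_eq (by positivity) h1, eq_div_of_mul_eq (by positivity) h2,
    eq_div_of_mul_eq (by positivity) h3, ascPochhammer_succ_eval (q + 1),
    ascPochhammer_eval_succ_left q, ascPochhammer_succ_eval j]
  push_cast
  rw [show α + 1 + ((j : ℝ) + 1) = α + 1 + j + 1 by ring]
  field_simp
  ring

theorem quadSummand_telescope_last (α : ℝ) (n k : ℕ) :
    (k + 1) * quadSummand α n (k + 1) k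
        - (2 * n - k) * (2 * α + 2 * n + 1 + k) * quadSummand α n k k
      = -((k + 1) * quadSummand α n (k + 1) (k + 1)) - quadCertificate α n k k := by
  simp only [quadSummand, quadCertificate, Nat.sub_self, Nat.add_sub_cancel_left, zero_add,
    ascPochhammer_zero, ascPochhammer_one, Polynomial.eval_one, Polynomial.eval_X,
    Nat.choose_zero_right, Nat.choose_one_right]
  have h3 := Nat.cast_choose_succ_right_mul (R := ℝ) n k
  rw [eq_div_of_mul_eq (by positivity) h3, ascPochhammer_succ_eval k (α + n + 1 / 2)]
  push_cast
  field_simp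
  ring

theorem sum_quadSummand_succ (α : ℝ) (n k : ℕ) :
    (k + 1) * ∑ j ∈ range (k + 2), quadSummand α n (k + 1) j
      = (2 * n - k) * (2 * α + 2 * n + 1 + k) * ∑ j ∈ range (k + 1), quadSummand α n k j := by
  have htel : (k + 1) * ∑ j ∈ range k, quadSummand α n (k + 1) j
      - (2 * n - k) * (2 * α + 2 * n + 1 + k) * ∑ j ∈ range k, quadSummand α n k j
      = quadCertificate α n k k - quadCertificate α n k 0 := by
    rw [mul_sum, mul_sum, ← sum_sub_distrib, ← sum_range_sub]
    exact sum_congr rfl fun j hj => quadSummand_telescope α (mem_range.1 hj)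
  have hG0 : quadCertificate α n k 0 = 0 := by simp [quadCertificate]
  rw [sum_range_succ _ (k + 1), sum_range_succ, sum_range_succ]
  linear_combination htel + quadSummand_telescope_last α n k - hG0

theorem sum_quadSummand (α : ℝ) (n k : ℕ) :
    ∑ j ∈ range (k + 1), quadSummand α n k j
      = (2 * n).choose k * (ascPochhammer ℝ k).eval (2 * α + 2 * n + 1) := by
  induction k with
  | zero => simp [quadSummand]
  | succ k ih =>
    have hchoose := Nat.cast_choose_succ_right_mul (R := ℝ) (2 * n) k
    push_cast at hchoose
    refine mul_left_cancel₀ (Nat.cast_add_one_ne_zero k) ?_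
    rw [sum_quadSummand_succ, ih, ascPochhammer_succ_eval]
    linear_combination
      -(ascPochhammer ℝ k).eval (2 * α + 2 * n + 1) * (2 * α + 2 * n + 1 + k) * hchoose


/-- The terminating series `₂F₁(-n, a + b + n + 1; a + 1; -u)`. -/
def jacobiSeries (a b : ℝ) (n : ℕ) (u : ℝ) : ℝ :=
  ∑ k ∈ range (n + 1), n.choose k *
    ((ascPochhammer ℝ k).eval (a + b + n + 1) / (ascPochhammer ℝ k).eval (a + 1)) * u ^ k

theorem jacobiSeries_quadratic {α : ℝ} (hα : ∀ m : ℕ, α + 1 ≠ -m) (n : ℕ) (u : ℝ) :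
    jacobiSeries α α (2 * n) u = jacobiSeries α (-(1 / 2)) n (4 * u * (u + 1)) := by
  have hpoch : ∀ k, (ascPochhammer ℝ k).eval (α + 1) ≠ 0 := fun k h => by
    obtain ⟨m, -, hm⟩ := (ascPochhammer_eval_eq_zero_iff k _).1 h
    exact hα m (by rw [hm]; ring)
  set g : ℕ → ℝ := fun j => n.choose j * 4 ^ j * (ascPochhammer ℝ j).eval (α + n + 1 / 2) /
    (ascPochhammer ℝ j).eval (α + 1)
  have hcoeff : ∀ k ∈ range (2 * n + 1), ((2 * n).choose k : ℝ) *
      ((ascPochhammer ℝ k).eval (α + α + (2 * n : ℕ) + 1) / (ascPochhammer ℝ k).eval (α + 1)) *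
        u ^ k
      = ∑ j ∈ range (k + 1), g j * j.choose (k - j) * u ^ k := by
    intro k _
    rw [show α + α + ((2 * n : ℕ) : ℝ) + 1 = 2 * α + 2 * n + 1 by push_cast; ring,
      ← mul_div_assoc, ← sum_quadSummand, sum_div, sum_mul]
    refine sum_congr rfl fun j hj => ?_
    have hsplit : (ascPochhammer ℝ k).eval (α + 1)
        = (ascPochhammer ℝ j).eval (α + 1) * (ascPochhammer ℝ (k - j)).eval (α + 1 + j) := by
      rw [← ascPochhammer_eval_add, Nat.add_sub_cancel' (Nat.lt_succ_iff.1 (mem_range.1 hj))]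
    have hk := hpoch k
    rw [hsplit] at hk ⊢
    simp only [quadSummand, g]
    field_simp [left_ne_zero_of_mul hk, right_ne_zero_of_mul hk]
  rw [jacobiSeries, sum_congr rfl hcoeff,
    sum_sum_choose_sub_mul_pow n g fun j hj => by simp [g, Nat.choose_eq_zero_of_lt hj],
    jacobiSeries]
  refine sum_congr rfl fun j _ => ?_
  rw [show α + -(1 / 2) + n + 1 = α + n + 1 / 2 by ring, mul_assoc 4, mul_pow 4]
  simp only [g]
  ring

theorem jacobiP_one {a b : ℝ} {n : ℕ} (hab : ∀ m : ℕ, a + b + n + 1 ≠ -m) :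
    jacobiP a b n 1 = Real.Gamma (a + n + 1) / (n.factorial * Real.Gamma (a + 1)) := by
  have hΓ := Real.Gamma_ne_zero hab
  rw [jacobiP, sum_range_succ', sum_eq_zero fun k _ => by simp]
  simp only [Nat.choose_zero_right, Nat.cast_zero, Nat.cast_one, add_zero, zero_add, pow_zero,
    one_mul, mul_one]
  field_simp

theorem jacobiP_one_pos {a b : ℝ} {n : ℕ} (ha : -1 < a) (hab : ∀ m : ℕ, a + b + n + 1 ≠ -m) :
    0 < jacobiP a b n 1 := by
  rw [jacobiP_one hab, add_right_comm]
  have ha1 : 0 < a + 1 := by linarith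
  exact div_pos (Real.Gamma_pos_of_pos (by positivity))
    (mul_pos (by positivity) (Real.Gamma_pos_of_pos ha1))

theorem jacobiP_eq_jacobiP_one_mul {a b : ℝ} {n : ℕ} (ha : ∀ m : ℕ, a + 1 ≠ -m)
    (hab : ∀ m : ℕ, a + b + n + 1 ≠ -m) (x : ℝ) :
    jacobiP a b n x = jacobiP a b n 1 * jacobiSeries a b n ((x - 1) / 2) := by
  rw [jacobiP_one hab, jacobiP, jacobiSeries, mul_sum, mul_sum]
  refine sum_congr rfl fun k _ => ?_
  rw [show a + b + n + k + 1 = a + b + n + 1 + k by ring, show a + k + 1 = a + 1 + k by ring,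
    Real.Gamma_add_nat_eq_mul_ascPochhammer hab, Real.Gamma_add_nat_eq_mul_ascPochhammer ha]
  have hΓab := Real.Gamma_ne_zero hab
  have hΓa := Real.Gamma_ne_zero ha
  field_simp

/-- Quadratic transformation for Jacobi polynomials:
`P_{2n}^{(α,α)}(y)·P_n^{(α,−1/2)}(1) = P_n^{(α,−1/2)}(2y²−1)·P_{2n}^{(α,α)}(1)`;
equivalently, `R_{2n}^{(α,α)}(cos(θ/2)) = R_n^{(α,−1/2)}(cos θ)` for the normalised
Jacobi polynomials. -/
theorem jacobi_quadratic_transformation (α : ℝ) (hα : -1 < α) (n : ℕ) :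
    (∀ y : ℝ,
      jacobiP α α (2 * n) y * jacobiP α (-(1 / 2)) n 1
        = jacobiP α (-(1 / 2)) n (2 * y ^ 2 - 1) * jacobiP α α (2 * n) 1) ∧
    (∀ θ : ℝ,
      jacobiP α α (2 * n) (Real.cos (θ / 2)) / jacobiP α α (2 * n) 1
        = jacobiP α (-(1 / 2)) n (Real.cos θ) / jacobiP α (-(1 / 2)) n 1) := by
  by_cases hdeg : n = 0 ∧ α = -(1 / 2)
  · -- `Γ(2α + 1) = Γ(α + 1/2) = Γ 0 = 0`: every polynomial involved is the junk value `0`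
    obtain ⟨rfl, rfl⟩ := hdeg
    norm_num [jacobiP]
  have hc : α + n + 1 / 2 ≠ 0 := fun h => by
    obtain rfl : n = 0 := Nat.lt_one_iff.1 (by exact_mod_cast (by linarith : (n : ℝ) < 1))
    exact hdeg ⟨rfl, by rw [Nat.cast_zero] at h; linarith⟩
  have ha : ∀ m : ℕ, α + 1 ≠ -m := ne_neg_natCast_of_neg_one_lt (by linarith) (by linarith)
  have hαα : ∀ m : ℕ, α + α + ((2 * n : ℕ) : ℝ) + 1 ≠ -m :=
    ne_neg_natCast_of_neg_one_lt (by push_cast; linarith [n.cast_nonneg (α := ℝ)])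
      (by push_cast; contrapose! hc; linarith)
  have hαh : ∀ m : ℕ, α + -(1 / 2) + n + 1 ≠ -m :=
    ne_neg_natCast_of_neg_one_lt (by linarith [n.cast_nonneg (α := ℝ)])
      (by contrapose! hc; linarith)
  have part1 : ∀ y : ℝ, jacobiP α α (2 * n) y * jacobiP α (-(1 / 2)) n 1
      = jacobiP α (-(1 / 2)) n (2 * y ^ 2 - 1) * jacobiP α α (2 * n) 1 := fun y => by
    rw [jacobiP_eq_jacobiP_one_mul ha hαα y, jacobiP_eq_jacobiP_one_mul ha hαh (2 * y ^ 2 - 1),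
      show (2 * y ^ 2 - 1 - 1) / 2 = 4 * ((y - 1) / 2) * ((y - 1) / 2 + 1) by ring,
      ← jacobiSeries_quadratic ha]
    ring
  refine ⟨part1, fun θ => ?_⟩
  rw [div_eq_div_iff (jacobiP_one_pos hα hαα).ne' (jacobiP_one_pos hα hαh).ne']
  simpa only [← Real.cos_two_mul, mul_div_cancel₀ θ two_ne_zero] using part1 (Real.cos (θ / 2))
end
end
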